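/- The Hemlock algorithm provides mutual exclusion: in every execution of the Hemlock transition-system model, for every lock L and every reachable state, at most one thread is in the critical section protected by L. -/

import Mathlib

namespace Hemlock

/-- Program counter locations of a thread in the Hemlock algorithm. -/
inductive PC where
  | remainder  -- in the remainder section
  | entrySpin  -- in the entry code, spinning on the predecessor's Grant field
  | crit       -- in the critical section
  | exitCAS    -- in the exit code, about to perform the CAS on Tail
  | exitDoor   -- in the exit code, about to perform the exit doorstep (write Grant self := some L)
  | exitSpin   -- in the exit code, spinning on its own Grant field
deriving DecidableEq

/-- A global state of the Hemlock transition system. -/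
structure St (Thread Lock : Type) where
  Tail : Lock → Option Thread        -- the Tail field of each lock
  Grant : Thread → Option Lock       -- the Grant field of each thread
  pc : Thread → PC                   -- program counter of each thread
  lk : Thread → Option Lock          -- the lock currently being acquired/released by each thread
  pred : Thread → Option Thread      -- value returned by each thread's last SWAP

variable {Thread Lock : Type} [DecidableEq Thread] [DecidableEq Lock]

/-- The initial state: all Tail and Grant fields are none, all threads in the remainder. -/
def initSt : St Thread Lock :=
  ⟨fun _ => none, fun _ => none, fun _ => .remainder, fun _ => none, fun _ => none⟩

/-- One atomic transition of thread `t`. -/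
inductive Step (t : Thread) : St Thread Lock → St Thread Lock → Prop where
  /-- a step inside the remainder section -/
  | remainderStay (s : St Thread Lock) (h : s.pc t = .remainder) :
      Step t s s
  /-- the entry doorstep for lock `L`: atomic SWAP on `Tail L`, storing the old value in `pred`;
      if the SWAP returned `none` the thread enters the critical section, else it spins -/
  | doorstep (s : St Thread Lock) (L : Lock) (h : s.pc t = .remainder) :
      Step t s ⟨Function.update s.Tail L (some t), s.Grant,
        Function.update s.pc t (if s.Tail L = none then .crit else .entrySpin),
        Function.update s.lk t (some L),
        Function.update s.pred t (s.Tail L)⟩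
  /-- entry-code busy-wait loop: read `Grant p`; it is not yet `some L`, keep spinning -/
  | spinWait (s : St Thread Lock) (p : Thread) (L : Lock)
      (h : s.pc t = .entrySpin) (hp : s.pred t = some p) (hl : s.lk t = some L)
      (hg : s.Grant p ≠ some L) :
      Step t s s
  /-- entry-code busy-wait loop: read `Grant p = some L`; write `Grant p := none`
      and enter the critical section -/
  | spinAcquire (s : St Thread Lock) (p : Thread) (L : Lock)
      (h : s.pc t = .entrySpin) (hp : s.pred t = some p) (hl : s.lk t = some L)
      (hg : s.Grant p = some L) :
      Step t s ⟨s.Tail, Function.update s.Grant p none,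
        Function.update s.pc t .crit, s.lk, s.pred⟩
  /-- a step inside the critical section -/
  | critStay (s : St Thread Lock) (h : s.pc t = .crit) :
      Step t s s
  /-- leave the critical section and begin the exit code -/
  | exitStart (s : St Thread Lock) (h : s.pc t = .crit) :
      Step t s ⟨s.Tail, s.Grant, Function.update s.pc t .exitCAS, s.lk, s.pred⟩
  /-- successful CAS: `Tail L = some self`, so set `Tail L := none` and
      complete the exit code, returning to the remainder section -/
  | casSucc (s : St Thread Lock) (L : Lock)
      (h : s.pc t = .exitCAS) (hl : s.lk t = some L) (ht : s.Tail L = some t) :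
      Step t s ⟨Function.update s.Tail L none, s.Grant,
        Function.update s.pc t .remainder, Function.update s.lk t none, s.pred⟩
  /-- failed CAS: `Tail L ≠ some self`; proceed to the exit doorstep -/
  | casFail (s : St Thread Lock) (L : Lock)
      (h : s.pc t = .exitCAS) (hl : s.lk t = some L) (ht : s.Tail L ≠ some t) :
      Step t s ⟨s.Tail, s.Grant, Function.update s.pc t .exitDoor, s.lk, s.pred⟩
  /-- the exit doorstep: write `Grant self := some L` and start spinning on `Grant self` -/
  | exitDoorstep (s : St Thread Lock) (L : Lock)
      (h : s.pc t = .exitDoor) (hl : s.lk t = some L) :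
      Step t s ⟨s.Tail, Function.update s.Grant t (some L),
        Function.update s.pc t .exitSpin, s.lk, s.pred⟩
  /-- exit-code busy-wait loop: read `Grant self`; it is not yet `none`, keep spinning -/
  | exitSpinWait (s : St Thread Lock) (h : s.pc t = .exitSpin) (hg : s.Grant t ≠ none) :
      Step t s s
  /-- exit-code busy-wait loop: read `Grant self = none`; complete the exit code,
      returning to the remainder section -/
  | exitDone (s : St Thread Lock) (h : s.pc t = .exitSpin) (hg : s.Grant t = none) :
      Step t s ⟨s.Tail, s.Grant, Function.update s.pc t .remainder,
        Function.update s.lk t none, s.pred⟩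

/-- An execution of the Hemlock transition system: an infinite sequence of states starting
    from the initial state, where each step is one transition of the scheduled thread;
    every thread whose program counter is in the entry, exit or critical section eventually
    takes another step, and every thread leaves each critical section after finitely
    many steps. -/
structure Execution (Thread Lock : Type) [DecidableEq Thread] [DecidableEq Lock]
    [Fintype Thread] where
  states : ℕ → St Thread Lock
  sched : ℕ → Thread
  init : states 0 = initSt
  steps : ∀ n, Step (sched n) (states n) (states (n + 1))
  fair : ∀ n t, (states n).pc t ≠ PC.remainder → ∃ m, n ≤ m ∧ sched m = t
  critFinite : ∀ n t, (states n).pc t = PC.crit → ∃ m, n ≤ m ∧ (states m).pc t ≠ PC.crit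

variable [Fintype Thread]

/-- Thread `t` executes the entry doorstep (the SWAP) for lock `L` at time `n`. -/
def doorstepAt (E : Execution Thread Lock) (n : ℕ) (t : Thread) (L : Lock) : Prop :=
  E.sched n = t ∧ (E.states n).pc t = PC.remainder ∧
    (E.states (n + 1)).pc t ≠ PC.remainder ∧ (E.states (n + 1)).lk t = some L

/-- Thread `t` performs the CAS step of the exit code for lock `L` at time `n`
    (successful or not). -/
def casAt (E : Execution Thread Lock) (n : ℕ) (t : Thread) (L : Lock) : Prop :=
  E.sched n = t ∧ (E.states n).pc t = PC.exitCAS ∧ (E.states n).lk t = some L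

/-- Thread `t` performs the exit doorstep (the write `Grant t := some L`) at time `n`. -/
def exitDoorAt (E : Execution Thread Lock) (n : ℕ) (t : Thread) (L : Lock) : Prop :=
  E.sched n = t ∧ (E.states n).pc t = PC.exitDoor ∧ (E.states n).lk t = some L

/-- Thread `t` is in the critical section protected by `L` in state `s`. -/
def inCS (s : St Thread Lock) (t : Thread) (L : Lock) : Prop :=
  s.pc t = PC.crit ∧ s.lk t = some L

/-- Thread `t` is in the entry code for lock `L` in state `s`. -/
def inEntry (s : St Thread Lock) (t : Thread) (L : Lock) : Prop :=
  s.pc t = PC.entrySpin ∧ s.lk t = some L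

/-- Thread `t` enters the critical section protected by `L` at step `m`. -/
def entersCSAt (E : Execution Thread Lock) (m : ℕ) (t : Thread) (L : Lock) : Prop :=
  E.sched m = t ∧ (E.states m).pc t ≠ PC.crit ∧
    (E.states (m + 1)).pc t = PC.crit ∧ (E.states (m + 1)).lk t = some L

/-- Thread `t` completes its critical section protected by `L` at step `k`
    (leaving the critical section and beginning the exit code). -/
def exitsCSAt (E : Execution Thread Lock) (k : ℕ) (t : Thread) (L : Lock) : Prop :=
  E.sched k = t ∧ (E.states k).pc t = PC.crit ∧ (E.states k).lk t = some L ∧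
    (E.states (k + 1)).pc t ≠ PC.crit

/-- Thread `t` completes the exit code for lock `L` at step `k`
    (returning to the remainder section). -/
def completesExitAt (E : Execution Thread Lock) (k : ℕ) (t : Thread) (L : Lock) : Prop :=
  E.sched k = t ∧ (E.states k).lk t = some L ∧
    (E.states k).pc t ≠ PC.remainder ∧ (E.states (k + 1)).pc t = PC.remainder

/-- `m` is the first time at or after `n` at which thread `t` enters the
    critical section protected by `L`. -/
def firstEntryAfter (E : Execution Thread Lock) (n m : ℕ) (t : Thread) (L : Lock) : Prop :=
  n ≤ m ∧ entersCSAt E m t L ∧ ∀ k, n ≤ k → k < m → ¬ entersCSAt E k t L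

/-- At time `n`, thread `T` is spinning in the entry code waiting for `Grant w`
    to become `some L`: its next step reads `Grant w` inside the entry-code
    busy-wait loop with current lock `L` and `pred = some w`. -/
def spinningEntryFor (E : Execution Thread Lock) (n : ℕ) (T w : Thread) (L : Lock) : Prop :=
  (E.states n).pc T = PC.entrySpin ∧ (E.states n).pred T = some w ∧
    (E.states n).lk T = some L

/-- At time `n`, thread `T` is spinning on the word `Grant w`: its next step reads
    `Grant w` inside one of the two busy-wait loops (the entry-code loop with
    `pred = some w`, or the exit-code loop executed by `w` itself). -/
def spinningOn (E : Execution Thread Lock) (n : ℕ) (T w : Thread) : Prop :=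
  ((E.states n).pc T = PC.entrySpin ∧ (E.states n).pred T = some w) ∨
    (T = w ∧ (E.states n).pc T = PC.exitSpin)

/-- Lock `L` is associated with thread `T` at time `n`: `T` has executed the entry
    doorstep for `L` and has not yet completed the exit code for `L`. -/
def associated (E : Execution Thread Lock) (n : ℕ) (T : Thread) (L : Lock) : Prop :=
  ∃ m, m < n ∧ doorstepAt E m T L ∧ ∀ k, m < k → k < n → ¬ completesExitAt E k T L

end Hemlock

namespace Hemlock

/-!
For each lock `L` consider the tokens of `L`: a thread owning `L` (in its critical section, or in
the exit code before the CAS or the exit doorstep) holds one, and so does every word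
`Grant p = some L`. The invariant is that `L` has at most one token, and `Tail L ≠ none` while it
has one. A thread entering the critical section either takes the token out of `Grant p`, or
creates one by a SWAP that returned `none`, which by the second clause means there was none. On
exit, the exit doorstep moves the token into `Grant self`, and a successful CAS destroys it; that
token was the only one, so `Tail L` may become `none`. Threads in the critical section for `L`
hold tokens of `L`, hence there is at most one of them.
-/

section Invariant

variable {Thread Lock : Type}

def Owns (s : St Thread Lock) (L : Lock) (u : Thread) : Prop :=
  (s.pc u = PC.crit ∨ s.pc u = PC.exitCAS ∨ s.pc u = PC.exitDoor) ∧ s.lk u = some L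

/-- `inl u` stands for the thread `u`, `inr p` for the word `Grant p`. -/
def tokenHolders (s : St Thread Lock) (L : Lock) : Set (Thread ⊕ Thread) :=
  {x | x.elim (Owns s L) (fun p => s.Grant p = some L)}

@[simp] lemma inl_mem_tokenHolders {s : St Thread Lock} {L : Lock} {u : Thread} :
    Sum.inl u ∈ tokenHolders s L ↔ Owns s L u := Iff.rfl

@[simp] lemma inr_mem_tokenHolders {s : St Thread Lock} {L : Lock} {p : Thread} :
    Sum.inr p ∈ tokenHolders s L ↔ s.Grant p = some L := Iff.rfl

lemma inCS.inl_mem_tokenHolders {s : St Thread Lock} {t : Thread} {L : Lock}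
    (h : inCS s t L) : Sum.inl t ∈ tokenHolders s L :=
  ⟨Or.inl h.1, h.2⟩

structure Inv (s : St Thread Lock) : Prop where
  subsingleton : ∀ L, (tokenHolders s L).Subsingleton
  tail_ne_none : ∀ L, (tokenHolders s L).Nonempty → s.Tail L ≠ none

lemma inv_initSt [DecidableEq Thread] [DecidableEq Lock] : Inv (initSt : St Thread Lock) := by
  have : ∀ L, tokenHolders (initSt : St Thread Lock) L = ∅ := by
    intro L; ext (u | p) <;> simp [Owns, initSt]
  exact ⟨fun L => by simp [this], fun L => by simp [this]⟩

lemma Inv.of_subset {s s' : St Thread Lock} (hI : Inv s)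
    (hsub : ∀ L, tokenHolders s' L ⊆ tokenHolders s L)
    (htail : ∀ L, (tokenHolders s L ∩ tokenHolders s' L).Nonempty → s'.Tail L ≠ none) :
    Inv s' :=
  ⟨fun L => (hI.subsingleton L).anti (hsub L), fun L ⟨y, hy⟩ => htail L ⟨y, hsub L hy, hy⟩⟩

lemma Inv.of_insert {s s' : St Thread Lock} (hI : Inv s) {L : Lock} {x : Thread ⊕ Thread}
    (hsub : ∀ L' y, y ∈ tokenHolders s' L' → y ∈ tokenHolders s L' ∨ (L' = L ∧ y = x))
    (hfree : ∀ y ∈ tokenHolders s L, y ∉ tokenHolders s' L)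
    (htail : ∀ L', s.Tail L' ≠ none → s'.Tail L' ≠ none) (hnew : s'.Tail L ≠ none) :
    Inv s' := by
  refine ⟨fun L' y hy z hz => ?_, fun L' ⟨y, hy⟩ => ?_⟩
  · rcases hsub L' y hy with hy' | ⟨rfl, rfl⟩ <;> rcases hsub L' z hz with hz' | ⟨hL, rfl⟩
    · exact hI.subsingleton L' hy' hz'
    · subst hL; exact absurd hy (hfree y hy')
    · exact absurd hz (hfree z hz')
    · rfl
  · rcases hsub L' y hy with hy' | ⟨rfl, -⟩
    · exact htail L' (hI.tail_ne_none L' ⟨y, hy'⟩)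
    · exact hnew

lemma Inv.of_owns_imp {s s' : St Thread Lock} (hI : Inv s)
    (hown : ∀ L u, Owns s' L u → Owns s L u) (hG : s'.Grant = s.Grant)
    (htail : ∀ L, s.Tail L ≠ none → s'.Tail L ≠ none) : Inv s' := by
  refine hI.of_subset (fun L => ?_) fun L h =>
    htail L (hI.tail_ne_none L (h.mono Set.inter_subset_left))
  rintro (u | p) hu
  · exact hown L u hu
  · simpa [hG] using hu

section Steps

variable [DecidableEq Thread] {t : Thread} {s : St Thread Lock}

lemma Inv.exitStart (hI : Inv s) (h : s.pc t = .crit) :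
    Inv ⟨s.Tail, s.Grant, Function.update s.pc t .exitCAS, s.lk, s.pred⟩ :=
  hI.of_owns_imp (fun L u hu => by by_cases hut : u = t <;> simp_all [Owns]) rfl fun _ => id

lemma Inv.casFail (hI : Inv s) (h : s.pc t = .exitCAS) :
    Inv ⟨s.Tail, s.Grant, Function.update s.pc t .exitDoor, s.lk, s.pred⟩ :=
  hI.of_owns_imp (fun L u hu => by by_cases hut : u = t <;> simp_all [Owns]) rfl fun _ => id

lemma Inv.exitDone (hI : Inv s) :
    Inv ⟨s.Tail, s.Grant, Function.update s.pc t .remainder, Function.update s.lk t none,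
      s.pred⟩ :=
  hI.of_owns_imp (fun L u hu => by by_cases hut : u = t <;> simp_all [Owns]) rfl fun _ => id

lemma Inv.spinAcquire (hI : Inv s) {p : Thread} {L : Lock} (hl : s.lk t = some L)
    (hg : s.Grant p = some L) :
    Inv ⟨s.Tail, Function.update s.Grant p none, Function.update s.pc t .crit, s.lk, s.pred⟩ := by
  refine hI.of_insert (x := .inl t) (L := L) ?_ ?_ (fun _ => id) (hI.tail_ne_none L ⟨.inr p, hg⟩)
  · rintro L' (u | q) hu
    · by_cases hut : u = t <;> simp_all [Owns]
    · by_cases hqp : q = p <;> simp_all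
  · intro y hy hy'
    obtain rfl : y = .inr p := hI.subsingleton L hy hg
    simp at hy'

lemma Inv.exitDoorstep (hI : Inv s) {L : Lock} (h : s.pc t = .exitDoor) (hl : s.lk t = some L) :
    Inv ⟨s.Tail, Function.update s.Grant t (some L), Function.update s.pc t .exitSpin, s.lk,
      s.pred⟩ := by
  have hown : Owns s L t := ⟨Or.inr (Or.inr h), hl⟩
  refine hI.of_insert (x := .inr t) (L := L) ?_ ?_ (fun _ => id) (hI.tail_ne_none L ⟨.inl t, hown⟩)
  · rintro L' (u | q) hu
    · by_cases hut : u = t <;> simp_all [Owns]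
    · by_cases hqt : q = t <;> simp_all
  · intro y hy hy'
    obtain rfl : y = .inl t := hI.subsingleton L hy hown
    simp [Owns] at hy'

variable [DecidableEq Lock]

lemma Inv.doorstep (hI : Inv s) (L : Lock) (h : s.pc t = .remainder) :
    Inv ⟨Function.update s.Tail L (some t), s.Grant,
      Function.update s.pc t (if s.Tail L = none then .crit else .entrySpin),
      Function.update s.lk t (some L), Function.update s.pred t (s.Tail L)⟩ := by
  have htail : ∀ L', s.Tail L' ≠ none → Function.update s.Tail L (some t) L' ≠ none := by
    intro L' hL'; by_cases hL : L' = L <;> simp_all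
  by_cases hfree : s.Tail L = none
  · refine hI.of_insert (x := .inl t) (L := L) ?_ ?_ htail (by simp)
    · rintro L' (u | q) hu
      · by_cases hut : u = t <;> simp_all [Owns]
      · exact .inl hu
    · exact fun y hy => absurd hfree (hI.tail_ne_none L ⟨y, hy⟩)
  · refine hI.of_owns_imp (fun L' u hu => ?_) rfl htail
    by_cases hut : u = t <;> simp_all [Owns]

lemma Inv.casSucc (hI : Inv s) {L : Lock} (h : s.pc t = .exitCAS) (hl : s.lk t = some L) :
    Inv ⟨Function.update s.Tail L none, s.Grant, Function.update s.pc t .remainder,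
      Function.update s.lk t none, s.pred⟩ := by
  refine hI.of_subset (fun L' => ?_) fun L' ⟨y, hy, hy'⟩ => ?_
  · rintro (u | q) hu
    · by_cases hut : u = t <;> simp_all [Owns]
    · exact hu
  · by_cases hL : L' = L
    · subst hL
      obtain rfl : y = .inl t := hI.subsingleton L' hy ⟨Or.inr (Or.inl h), hl⟩
      simp [Owns] at hy'
    · simpa [hL] using hI.tail_ne_none L' ⟨y, hy⟩

lemma Step.inv {s s' : St Thread Lock} (hst : Step t s s') (hI : Inv s) : Inv s' := by
  cases hst with
  | remainderStay | spinWait | critStay | exitSpinWait => exact hI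
  | doorstep L h => exact hI.doorstep L h
  | spinAcquire p L _ _ hl hg => exact hI.spinAcquire hl hg
  | exitStart h => exact hI.exitStart h
  | casSucc L h hl => exact hI.casSucc h hl
  | casFail L h => exact hI.casFail h
  | exitDoorstep L h hl => exact hI.exitDoorstep h hl
  | exitDone => exact hI.exitDone

end Steps

end Invariant

lemma Execution.inv {Thread Lock : Type} [DecidableEq Thread] [DecidableEq Lock] [Fintype Thread]
    (E : Execution Thread Lock) (n : ℕ) : Inv (E.states n) := by
  induction n with
  | zero => exact E.init ▸ inv_initSt
  | succ n ih => exact (E.steps n).inv ih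

/-- Mutual exclusion: at any reachable state, at most one thread is in the critical
section protected by any given lock `L`. -/
theorem mutual_exclusion {Thread Lock : Type} [DecidableEq Thread] [DecidableEq Lock]
    [Fintype Thread] (E : Execution Thread Lock) (L : Lock) (n : ℕ)
    (T1 T2 : Thread) (h1 : inCS (E.states n) T1 L) (h2 : inCS (E.states n) T2 L) :
    T1 = T2 :=
  Sum.inl_injective <|
    (E.inv n).subsingleton L h1.inl_mem_tokenHolders h2.inl_mem_tokenHolders

end Hemlock
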